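/- arXiv:1703.10414 — 4 statements merged into one kernel-verified Lean document; each statement's English description precedes it below -/
import Mathlib

section
/- The space 𝔈 is complete with respect to the pseudometric d_acs: for every family of matrix sequences ({B_{n,m}}_n)_{m≥1} that is Cauchy with respect to d_acs (i.e., for every ε > 0 there is M such that d_acs({B_{n,s}}_n, {B_{n,t}}_n) < ε for all s, t ≥ M), there exists a matrix sequence {A_n} ∈ 𝔈 such that d_acs({B_{n,m}}_n, {A_n}) → 0 as m → ∞. -/
/-!
The limit is built by a diagonal argument that needs no triangle inequality for `d_acs`:
choose `κ n → ∞` so slowly that, with `k = κ n`,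
`p(B_{n,m} - B_{n,k}) ≤ d_acs({B_{·,m}}, {B_{·,k}}) + 1/k` for every `m ≤ k`,
and put `A_n := B_{n,κ n}`. Then `d_acs({B_{·,m}}, {A_n}) ≤ limsup_t d_acs({B_{·,m}}, {B_{·,t}})`,
which tends to `0` as `m → ∞` by the Cauchy property.
-/

open MeasureTheory Filter
open scoped ENNReal NNReal

/-- The singular values of a complex square matrix, arranged in non-increasing order:
`sv A 0 = σ₁(A) ≥ sv A 1 = σ₂(A) ≥ …` (the square roots of the eigenvalues of `Aᴴ * A`). -/
noncomputable def sv {n : ℕ} (A : Matrix (Fin n) (Fin n) ℂ) : Fin n → ℝ :=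
  fun i =>
    (fun j => Real.sqrt ((Matrix.isHermitian_conjTranspose_mul_self A).eigenvalues j))
      (Tuple.sort (fun j => Real.sqrt ((Matrix.isHermitian_conjTranspose_mul_self A).eigenvalues j))
        i.rev)

/-- `p(A) := min_{1 ≤ i ≤ n} ((i-1)/n + σᵢ(A))` (here `i : Fin n` plays the role of `i-1`). -/
noncomputable def pA {n : ℕ} (A : Matrix (Fin n) (Fin n) ℂ) : ℝ :=
  ⨅ i : Fin n, (((i : ℕ) : ℝ) / n + sv A i)

/-- `ρ({A_n}) := limsup_{n→∞} p(A_n)`, valued in `[0,∞]`. -/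
noncomputable def rho (A : (n : ℕ) → Matrix (Fin n) (Fin n) ℂ) : ℝ≥0∞ :=
  Filter.limsup (fun n => ENNReal.ofReal (pA (A n))) Filter.atTop

/-- The a.c.s. pseudometric `d_acs({A_n},{B_n}) := ρ({A_n − B_n})`. -/
noncomputable def dacs (A B : (n : ℕ) → Matrix (Fin n) (Fin n) ℂ) : ℝ≥0∞ :=
  rho (fun n => A n - B n)

/-- `{A_n} ∼_σ k` : the sequence `{A_n}` has spectral (singular value) symbol `k` on `D`. -/
def SpecSymb {d : ℕ} (D : Set (Fin d → ℝ)) (A : (n : ℕ) → Matrix (Fin n) (Fin n) ℂ)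
    (k : (Fin d → ℝ) → ℂ) : Prop :=
  ∀ F : ℝ → ℂ, Continuous F → HasCompactSupport F →
    Filter.Tendsto (fun n : ℕ => (n : ℂ)⁻¹ * ∑ i : Fin n, F (sv (A n) i)) Filter.atTop
      (nhds ((volume D).toReal⁻¹ • ∫ x in D, F ‖k x‖))

/-- `p_m(f) := inf_{E ⊆ D measurable} ( |D∖E|/|D| + esssup_{x∈E} |f(x)| )`, valued in `[0,∞]`. -/
noncomputable def pm {d : ℕ} (D : Set (Fin d → ℝ)) (f : (Fin d → ℝ) → ℂ) : ℝ≥0∞ :=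
  ⨅ (E : Set (Fin d → ℝ)) (_ : MeasurableSet E) (_ : E ⊆ D),
    (volume (D \ E) / volume D + essSup (fun x => (‖f x‖₊ : ℝ≥0∞)) (volume.restrict E))

/-- `d_m(f,g) := p_m(f − g)`. -/
noncomputable def dm {d : ℕ} (D : Set (Fin d → ℝ)) (f g : (Fin d → ℝ) → ℂ) : ℝ≥0∞ :=
  pm D (fun x => f x - g x)

/-- A "group in 𝒞_D": a set `G` of pairs `({A_n}, k)` with `k` measurable and `{A_n} ∼_σ k`,
closed under addition and negation. -/
def IsGroupIn {d : ℕ} (D : Set (Fin d → ℝ))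
    (G : Set (((n : ℕ) → Matrix (Fin n) (Fin n) ℂ) × ((Fin d → ℝ) → ℂ))) : Prop :=
  (∀ p ∈ G, Measurable p.2 ∧ SpecSymb D p.1 p.2) ∧
  (∀ p ∈ G, ∀ q ∈ G, ((fun n => p.1 n + q.1 n), p.2 + q.2) ∈ G) ∧
  (∀ p ∈ G, ((fun n => -(p.1 n)), -p.2) ∈ G)

open Topology

theorem exists_tendsto_atTop_eventually_diag {P : ℕ → ℕ → Prop}
    (h : ∀ k, ∀ᶠ n in atTop, P k n) :
    ∃ κ : ℕ → ℕ, Tendsto κ atTop atTop ∧ ∀ᶠ n in atTop, P (κ n) n := by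
  choose N hN using fun k => eventually_atTop.1 (h k)
  refine ⟨fun n => Nat.findGreatest (fun k => N k ≤ n) n, ?_, ?_⟩
  · refine tendsto_atTop.2 fun K => eventually_atTop.2 ⟨max K (N K), fun n hn => ?_⟩
    exact Nat.le_findGreatest (le_of_max_le_left hn) (le_of_max_le_right hn)
  · exact eventually_atTop.2 ⟨N 0, fun n hn =>
      hN _ _ (Nat.findGreatest_spec (P := fun k => N k ≤ n) (Nat.zero_le n) hn)⟩

theorem ENNReal.eventually_le_limsup_add {α : Type*} {f : Filter α} (u : α → ℝ≥0∞)
    {ε : ℝ≥0∞} (hε : ε ≠ 0) : ∀ᶠ x in f, u x ≤ limsup u f + ε := by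
  rcases eq_or_ne (limsup u f) ⊤ with h | h
  · simp [h]
  · exact (eventually_lt_of_limsup_lt (ENNReal.lt_add_right h hε)).mono fun _ => le_of_lt

theorem ENNReal.exists_limsup_diagonal_le (u : ℕ → ℕ → ℕ → ℝ≥0∞) :
    ∃ κ : ℕ → ℕ, ∀ m, limsup (fun n => u m (κ n) n) atTop ≤
      limsup (fun t => limsup (u m t) atTop) atTop := by
  set v : ℕ → ℕ → ℝ≥0∞ := fun m t => limsup (u m t) atTop + (t : ℝ≥0∞)⁻¹
  have hv : ∀ k, ∀ᶠ n in atTop, ∀ m ∈ Set.Iic k, u m k n ≤ v m k := fun k =>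
    (Set.finite_Iic k).eventually_all.2 fun m _ =>
      ENNReal.eventually_le_limsup_add _ (ENNReal.inv_ne_zero.2 (ENNReal.natCast_ne_top k))
  obtain ⟨κ, hκ, hvκ⟩ := exists_tendsto_atTop_eventually_diag hv
  refine ⟨κ, fun m => ?_⟩
  calc limsup (fun n => u m (κ n) n) atTop
      ≤ limsup (v m ∘ κ) atTop := by
        refine limsup_le_limsup ?_
        filter_upwards [hvκ, hκ.eventually_ge_atTop m] with n hn hm using hn m hm
    _ ≤ limsup (v m) atTop := hκ.limsup_comp_le_limsup
    _ = limsup (fun t => limsup (u m t) atTop) atTop :=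
        ENNReal.limsup_add_of_right_tendsto_zero ENNReal.tendsto_inv_nat_nhds_zero _

theorem ENNReal.tendsto_limsup_nhds_zero_of_cauchy {d : ℕ → ℕ → ℝ≥0∞}
    (hd : ∀ ε : ℝ≥0∞, 0 < ε → ∃ M : ℕ, ∀ s t : ℕ, M ≤ s → M ≤ t → d s t < ε) :
    Tendsto (fun s => limsup (d s) atTop) atTop (𝓝 0) := by
  refine ENNReal.tendsto_nhds_zero.2 fun ε hε => ?_
  obtain ⟨M, hM⟩ := hd ε hε
  filter_upwards [eventually_ge_atTop M] with s hs
  exact limsup_le_of_le (by isBoundedDefault)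
    (eventually_atTop.2 ⟨M, fun t ht => (hM s t hs ht).le⟩)

/-- `𝔈` is complete with respect to the pseudometric `d_acs`. -/
theorem dacs_complete (B : ℕ → (n : ℕ) → Matrix (Fin n) (Fin n) ℂ)
    (hB : ∀ ε : ℝ≥0∞, 0 < ε → ∃ M : ℕ, ∀ s t : ℕ, M ≤ s → M ≤ t → dacs (B s) (B t) < ε) :
    ∃ A : (n : ℕ) → Matrix (Fin n) (Fin n) ℂ,
      Filter.Tendsto (fun m => dacs (B m) A) Filter.atTop (nhds 0) := by
  obtain ⟨κ, hκ⟩ :=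
    ENNReal.exists_limsup_diagonal_le fun m t n => ENNReal.ofReal (pA (B m n - B t n))
  exact ⟨fun n => B (κ n) n, tendsto_of_tendsto_of_tendsto_of_le_of_le tendsto_const_nhds
    (ENNReal.tendsto_limsup_nhds_zero_of_cauchy hB) (fun _ => zero_le) hκ⟩
end

section
/- If a matrix sequence {A_n} ∈ 𝔈 has spectral symbol g (i.e., {A_n} ∼_σ g), then p_m(g) ≤ ρ({A_n}). -/
open MeasureTheory Filter
open scoped ENNReal NNReal

/-!
Fix `ε > 0`. For large `n` some index `i` has `i/n + σᵢ(Aₙ) < ρ + ε`; by compactness the singular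
values `σᵢ(Aₙ)` so obtained cluster at some `v`, so for infinitely many `n` at most
`(ρ - v + 2ε) n` singular values of `Aₙ` exceed `s = v + ε`. Testing the symbol against a
continuous cut-off that vanishes below `s` and equals `1` on `[s + ε, M]`, and letting `M → ∞`,
shows `|g| ≥ s + ε` on a fraction at most `ρ - v + 2ε` of `D`. Taking `E = {|g| < s + ε}` in the
definition of `p_m` gives `p_m(g) ≤ ρ + 4ε`.
-/

open Set

lemma sv_nonneg {n : ℕ} (A : Matrix (Fin n) (Fin n) ℂ) (i : Fin n) : 0 ≤ sv A i :=
  Real.sqrt_nonneg _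

lemma sv_antitone {n : ℕ} (A : Matrix (Fin n) (Fin n) ℂ) : Antitone (sv A) := by
  intro i j hij
  exact Tuple.monotone_sort
    (fun j => Real.sqrt ((Matrix.isHermitian_conjTranspose_mul_self A).eigenvalues j))
    (Fin.rev_le_rev.mpr hij)

lemma Antitone.sum_comp_le_of_le {n : ℕ} {σ : Fin n → ℝ} (hσ : Antitone σ) {f : ℝ → ℝ} {s : ℝ}
    (hf1 : ∀ x, f x ≤ 1) (hf0 : ∀ x ≤ s, f x = 0) {i : Fin n} (hi : σ i ≤ s) :
    ∑ j, f (σ j) ≤ i := by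
  have hzero : ∀ j ∈ Finset.univ, j ∉ Finset.Iio i → f (σ j) = 0 := fun j _ hj =>
    hf0 _ ((hσ (not_lt.mp (by simpa using hj))).trans hi)
  calc ∑ j, f (σ j) = ∑ j ∈ Finset.Iio i, f (σ j) :=
        (Finset.sum_subset (Finset.subset_univ _) hzero).symm
    _ ≤ (Finset.Iio i).card • (1 : ℝ) := Finset.sum_le_card_nsmul _ _ _ fun j _ => hf1 _
    _ = i := by simp [Fin.card_Iio]

lemma exists_frequently_sv_le_of_rho_lt {A : (n : ℕ) → Matrix (Fin n) (Fin n) ℂ} {c c' : ℝ}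
    (hc : rho A < ENNReal.ofReal c) (hcc' : c < c') :
    ∃ s r : ℝ, s + r ≤ c' ∧ ∃ᶠ n in atTop, ∃ i : Fin n, sv (A n) i ≤ s ∧ (i : ℝ) / n ≤ r := by
  have hc0 : 0 < c := ENNReal.ofReal_pos.mp (pos_of_gt hc)
  have hgood : ∀ᶠ n in atTop,
      ∃ y ∈ Icc 0 c, ∃ i : Fin n, sv (A n) i = y ∧ (i : ℝ) / n + y < c := by
    filter_upwards [eventually_lt_of_limsup_lt hc, eventually_ge_atTop 1] with n hn hn1
    have : Nonempty (Fin n) := ⟨⟨0, hn1⟩⟩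
    obtain ⟨i, hi⟩ := exists_lt_of_ciInf_lt ((ENNReal.ofReal_lt_ofReal_iff hc0).mp hn)
    have : 0 ≤ (i : ℝ) / n := by positivity
    exact ⟨_, ⟨sv_nonneg _ _, by linarith⟩, i, rfl, hi⟩
  obtain ⟨N, hN⟩ := hgood.exists_forall_of_atTop
  choose! y hyc hy using hN
  obtain ⟨v, -, hv⟩ := isCompact_Icc.exists_mapClusterPt_of_frequently
    (eventually_atTop.2 ⟨N, hyc⟩).frequently
  have hδ : 0 < (c' - c) / 2 := by linarith
  refine ⟨v + (c' - c) / 2, c - v + (c' - c) / 2, by linarith, ?_⟩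
  have hnear := hv.frequently (Ioo_mem_nhds (sub_lt_self v hδ) (lt_add_of_pos_right v hδ))
  refine (hnear.and_eventually (eventually_ge_atTop N)).mono ?_
  rintro n ⟨⟨hvy, hyv⟩, hn⟩
  obtain ⟨i, hi, hlt⟩ := hy n hn
  exact ⟨i, by linarith, by linarith⟩

lemma SpecSymb.tendsto_real {d : ℕ} {D : Set (Fin d → ℝ)} {A : (n : ℕ) → Matrix (Fin n) (Fin n) ℂ}
    {g : (Fin d → ℝ) → ℂ} (h : SpecSymb D A g) {f : ℝ → ℝ} (hf : Continuous f)
    (hfs : HasCompactSupport f) :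
    Tendsto (fun n : ℕ => (n : ℝ)⁻¹ * ∑ i : Fin n, f (sv (A n) i)) atTop
      (nhds ((volume D).toReal⁻¹ * ∫ x in D, f ‖g x‖)) := by
  have hF := h (fun x => (f x : ℂ)) (by fun_prop) (hfs.comp_left Complex.ofReal_zero)
  beta_reduce at hF
  rw [integral_complex_ofReal, Complex.real_smul] at hF
  rw [← tendsto_ofReal_iff]
  push_cast at hF ⊢
  exact hF

section Symbol

variable {d : ℕ} {D : Set (Fin d → ℝ)} {g : (Fin d → ℝ) → ℂ}

lemma measureReal_inter_Icc_le_of_frequently_sv_le (hD : MeasurableSet D) (hD0 : 0 < volume D)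
    (hDfin : volume D < ⊤) (hg : Measurable g) {A : (n : ℕ) → Matrix (Fin n) (Fin n) ℂ}
    (h : SpecSymb D A g) {s r t : ℝ} (hst : s < t)
    (hfreq : ∃ᶠ n in atTop, ∃ i : Fin n, sv (A n) i ≤ s ∧ (i : ℝ) / n ≤ r) (M : ℝ) :
    volume.real (D ∩ {x | ‖g x‖ ∈ Icc t M}) ≤ r * volume.real D := by
  obtain ⟨f, hf1, hf0, hfs, hf01⟩ := exists_continuous_one_zero_of_isCompact isCompact_Icc
    isClosed_Iic (disjoint_left.2 fun x hx hx' => (hst.trans_le hx.1).not_ge hx')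
  have hmean : (volume D).toReal⁻¹ * ∫ x in D, f ‖g x‖ ≤ r := by
    refine le_of_tendsto_of_frequently (h.tendsto_real f.continuous hfs) (hfreq.mono ?_)
    rintro n ⟨i, hi, hir⟩
    have hcount := (sv_antitone (A n)).sum_comp_le_of_le (fun x => (hf01 x).2)
      (fun x hx => hf0 hx) hi
    calc (n : ℝ)⁻¹ * ∑ j, f (sv (A n) j) ≤ (n : ℝ)⁻¹ * i := by gcongr
      _ ≤ r := by rwa [inv_mul_eq_div]
  have hint : IntegrableOn (fun x => f ‖g x‖) D := by
    refine Measure.integrableOn_of_bounded (M := 1) hDfin.ne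
      (f.continuous.measurable.comp hg.norm).aestronglyMeasurable (ae_of_all _ fun x => ?_)
    rw [Real.norm_of_nonneg (hf01 _).1]
    exact (hf01 _).2
  have hSmeas : MeasurableSet (D ∩ {x | ‖g x‖ ∈ Icc t M}) :=
    hD.inter (hg.norm measurableSet_Icc)
  have hS : volume.real (D ∩ {x | ‖g x‖ ∈ Icc t M}) ≤ ∫ x in D, f ‖g x‖ :=
    calc volume.real (D ∩ {x | ‖g x‖ ∈ Icc t M})
        = volume.real (D ∩ {x | ‖g x‖ ∈ Icc t M}) • (1 : ℝ) := by rw [smul_eq_mul, mul_one]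
      _ ≤ ∫ x in D ∩ {x | ‖g x‖ ∈ Icc t M}, f ‖g x‖ :=
        setIntegral_ge_of_const_le hSmeas (measure_ne_top_of_subset inter_subset_left hDfin.ne)
          (fun x hx => (hf1 hx.2).ge) (hint.mono_set inter_subset_left)
      _ ≤ ∫ x in D, f ‖g x‖ := setIntegral_mono_set hint (ae_of_all _ fun x => (hf01 _).1)
          inter_subset_left.eventuallyLE
  have hvD : 0 < volume.real D := ENNReal.toReal_pos hD0.ne' hDfin.ne
  rw [← measureReal_def, inv_mul_le_iff₀ hvD] at hmean
  linarith

lemma volume_inter_le_of_frequently_sv_le (hD : MeasurableSet D) (hD0 : 0 < volume D)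
    (hDfin : volume D < ⊤) (hg : Measurable g) {A : (n : ℕ) → Matrix (Fin n) (Fin n) ℂ}
    (h : SpecSymb D A g) {s r t : ℝ} (hst : s < t)
    (hfreq : ∃ᶠ n in atTop, ∃ i : Fin n, sv (A n) i ≤ s ∧ (i : ℝ) / n ≤ r) :
    volume (D ∩ {x | t ≤ ‖g x‖}) ≤ ENNReal.ofReal r * volume D := by
  have hunion : D ∩ {x | t ≤ ‖g x‖} = ⋃ M : ℕ, D ∩ {x | ‖g x‖ ∈ Icc t M} := by
    ext x
    simp only [mem_inter_iff, mem_iUnion]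
    exact ⟨fun ⟨hxD, htx⟩ => (exists_nat_ge _).imp fun M hM => ⟨hxD, htx, hM⟩,
      fun ⟨_, hxD, htx, _⟩ => ⟨hxD, htx⟩⟩
  have hmono : Monotone fun M : ℕ => D ∩ {x | ‖g x‖ ∈ Icc t M} := fun M N hMN =>
    inter_subset_inter_right _ fun x hx => ⟨hx.1, hx.2.trans (Nat.cast_le.2 hMN)⟩
  rw [hunion, hmono.measure_iUnion]
  refine iSup_le fun M => ?_
  rw [← ofReal_measureReal (measure_ne_top_of_subset inter_subset_left hDfin.ne),
    ← ofReal_measureReal hDfin.ne, ← ENNReal.ofReal_mul' measureReal_nonneg]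
  exact ENNReal.ofReal_le_ofReal
    (measureReal_inter_Icc_le_of_frequently_sv_le hD hD0 hDfin hg h hst hfreq M)

lemma pm_le_volume_div_add (hD : MeasurableSet D) (hg : Measurable g) (t : ℝ) :
    pm D g ≤ volume (D ∩ {x | t ≤ ‖g x‖}) / volume D + ENNReal.ofReal t := by
  have hE : MeasurableSet (D ∩ {x | ‖g x‖ < t}) :=
    hD.inter (measurableSet_lt hg.norm measurable_const)
  have hDE : D \ (D ∩ {x | ‖g x‖ < t}) = D ∩ {x | t ≤ ‖g x‖} := by
    ext x
    simp +contextual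
  refine (iInf₂_le _ hE).trans ((iInf_le _ inter_subset_left).trans ?_)
  rw [hDE]
  gcongr
  refine essSup_le_of_ae_le _ (ae_restrict_of_forall_mem hE fun x hx => ?_)
  change ‖g x‖ₑ ≤ ENNReal.ofReal t
  rw [← ofReal_norm]
  exact ENNReal.ofReal_le_ofReal hx.2.le

end Symbol

/-- if `{A_n} ∼_σ g` then `p_m(g) ≤ ρ({A_n})`. -/
theorem pm_le_rho {d : ℕ} (D : Set (Fin d → ℝ)) (hD : MeasurableSet D)
    (hD0 : 0 < volume D) (hDfin : volume D < ⊤)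
    (A : (n : ℕ) → Matrix (Fin n) (Fin n) ℂ)
    (g : (Fin d → ℝ) → ℂ) (hg : Measurable g)
    (h : SpecSymb D A g) : pm D g ≤ rho A := by
  refine ENNReal.le_of_forall_pos_le_add fun η hη hρ => ?_
  have hε : (0 : ℝ) < η / 3 := by positivity
  have hρc : rho A < ENNReal.ofReal ((rho A).toReal + η / 3) :=
    (ENNReal.lt_ofReal_iff_toReal_lt hρ.ne).2 (by linarith)
  obtain ⟨s, r, hsr, hfreq⟩ := exists_frequently_sv_le_of_rho_lt hρc (lt_add_of_pos_right _ hε)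
  obtain ⟨n, i, hs, hr⟩ := hfreq.exists
  have hs0 : 0 ≤ s := (sv_nonneg _ _).trans hs
  have hr0 : 0 ≤ r := (by positivity : (0 : ℝ) ≤ i / n).trans hr
  calc pm D g
      ≤ volume (D ∩ {x | s + η / 3 ≤ ‖g x‖}) / volume D + ENNReal.ofReal (s + η / 3) :=
        pm_le_volume_div_add hD hg _
    _ ≤ ENNReal.ofReal r + ENNReal.ofReal (s + η / 3) := by
        gcongr
        exact ENNReal.div_le_of_le_mul (volume_inter_le_of_frequently_sv_le hD hD0 hDfin hg h
          (lt_add_of_pos_right s hε) hfreq)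
    _ = ENNReal.ofReal (r + (s + η / 3)) := (ENNReal.ofReal_add hr0 (by positivity)).symm
    _ ≤ ENNReal.ofReal ((rho A).toReal + η) := ENNReal.ofReal_le_ofReal (by linarith)
    _ = rho A + η := by
        rw [ENNReal.ofReal_add ENNReal.toReal_nonneg η.coe_nonneg, ENNReal.ofReal_toReal hρ.ne,
          ENNReal.ofReal_coe_nnreal]
end

section
/- Let G be a group in 𝒞_D containing all zero-distributed pairs ({C_n}, 0) with {C_n} ∼_σ 0, and assume that every measurable function k : D → ℂ is a symbol for G (for every measurable k there exists {A_n} ∈ 𝔈 with ({A_n},k) ∈ G). Then G is a maximal group in 𝒞_D with respect to inclusion: if N is any group in 𝒞_D with G ⊆ N, then N = G. -/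
/-!
Given `({A_n}, k)` in the larger group `N`, pick `({B_n}, k)` in `G` with the same symbol. Then
`({A_n - B_n}, 0)` lies in `N`, so `{A_n - B_n}` is zero-distributed and the pair lies in `G`;
adding back `({B_n}, k)` shows that `({A_n}, k)` lies in `G`.
-/

open MeasureTheory Filter
open scoped ENNReal NNReal

theorem subset_of_ker_subset_of_image_subset {α β : Type*} [AddGroup α] [AddGroup β]
    (f : α →+ β) {G N : Set α} (hG_add : ∀ p ∈ G, ∀ q ∈ G, p + q ∈ G)
    (hG_neg : ∀ p ∈ G, -p ∈ G) (hN_add : ∀ p ∈ N, ∀ q ∈ N, p + q ∈ N) (hGN : G ⊆ N)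
    (hker : ∀ p ∈ N, f p = 0 → p ∈ G) (himage : ∀ p ∈ N, ∃ q ∈ G, f q = f p) : N ⊆ G := by
  intro p hp
  obtain ⟨q, hq, hfq⟩ := himage p hp
  have hdiff : p + -q ∈ G := hker _ (hN_add p hp _ (hGN (hG_neg q hq))) (by simp [hfq])
  simpa using hG_add _ hdiff q hq

namespace IsGroupIn

variable {d : ℕ} {D : Set (Fin d → ℝ)}
  {G : Set (((n : ℕ) → Matrix (Fin n) (Fin n) ℂ) × ((Fin d → ℝ) → ℂ))}

theorem add_mem (hG : IsGroupIn D G) : ∀ p ∈ G, ∀ q ∈ G, p + q ∈ G :=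
  hG.2.1

theorem neg_mem (hG : IsGroupIn D G) : ∀ p ∈ G, -p ∈ G :=
  hG.2.2

end IsGroupIn

theorem group_is_maximal_general {d : ℕ} (D : Set (Fin d → ℝ))
    (G : Set (((n : ℕ) → Matrix (Fin n) (Fin n) ℂ) × ((Fin d → ℝ) → ℂ)))
    (hG : IsGroupIn D G)
    (hZ : ∀ C : (n : ℕ) → Matrix (Fin n) (Fin n) ℂ,
      SpecSymb D C (fun _ => 0) → (C, fun _ => (0 : ℂ)) ∈ G)
    (hall : ∀ k : (Fin d → ℝ) → ℂ, Measurable k →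
      ∃ A : (n : ℕ) → Matrix (Fin n) (Fin n) ℂ, (A, k) ∈ G) :
    ∀ N : Set (((n : ℕ) → Matrix (Fin n) (Fin n) ℂ) × ((Fin d → ℝ) → ℂ)),
      IsGroupIn D N → G ⊆ N → N = G := by
  intro N hN hGN
  refine (subset_of_ker_subset_of_image_subset (AddMonoidHom.snd _ _) hG.add_mem hG.neg_mem
    hN.add_mem hGN ?_ ?_).antisymm hGN
  · rintro ⟨A, k⟩ hp (rfl : k = 0)
    exact hZ A (hN.1 _ hp).2
  · intro p hp
    obtain ⟨A, hA⟩ := hall p.2 (hN.1 p hp).1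
    exact ⟨_, hA, rfl⟩

/-- if a group `G` in `𝒞_D` contains all zero-distributed pairs and every
measurable function is a symbol for `G`, then `G` is a maximal group in `𝒞_D`. -/
theorem group_is_maximal {d : ℕ} (D : Set (Fin d → ℝ))
    (hD : MeasurableSet D) (hD0 : 0 < volume D) (hDfin : volume D < ⊤)
    (G : Set (((n : ℕ) → Matrix (Fin n) (Fin n) ℂ) × ((Fin d → ℝ) → ℂ)))
    (hG : IsGroupIn D G)
    (hZ : ∀ C : (n : ℕ) → Matrix (Fin n) (Fin n) ℂ,
      SpecSymb D C (fun _ => 0) → (C, fun _ => (0 : ℂ)) ∈ G)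
    (hall : ∀ k : (Fin d → ℝ) → ℂ, Measurable k →
      ∃ A : (n : ℕ) → Matrix (Fin n) (Fin n) ℂ, (A, k) ∈ G) :
    ∀ N : Set (((n : ℕ) → Matrix (Fin n) (Fin n) ℂ) × ((Fin d → ℝ) → ℂ)),
      IsGroupIn D N → G ⊆ N → N = G :=
  group_is_maximal_general D G hG hZ hall
end

section
/- The pseudometric d_acs induces a.c.s. convergence: for {A_n} ∈ 𝔈 and a family of matrix sequences ({B_{n,m}}_n)_m, one has d_acs({A_n}, {B_{n,m}}_n) → 0 as m → ∞ if and only if for every m there exist matrices N_{n,m}, R_{n,m} ∈ ℂ^{n×n}, an index n_m, and numbers ω(m), c(m) ≥ 0 with ω(m) → 0 and c(m) → 0 as m → ∞, such that A_n = B_{n,m} + N_{n,m} + R_{n,m}, ‖N_{n,m}‖ ≤ ω(m) (spectral norm), and rank(R_{n,m}) ≤ n·c(m) for all n > n_m. -/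
open MeasureTheory Filter
open scoped ENNReal NNReal

/-- The spectral norm of a matrix: its largest singular value. -/
noncomputable def specNorm {n : ℕ} (A : Matrix (Fin n) (Fin n) ℂ) : ℝ :=
  ⨆ i : Fin n, sv A i

/-!
Write `λ_j`, `b_j` for the eigenvalues and an orthonormal eigenbasis of `Cᴴ C`, so that
`‖C x‖² = ∑ λ_j |⟪b_j, x⟫|²`. Comparing this with `‖x‖² = ∑ |⟪b_j, x⟫|²` gives the
Courant–Fischer form of the singular values: `σ_{k+1}(C) ≤ t` iff `‖C x‖ ≤ t ‖x‖` on a subspace of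
codimension at most `k`. Projecting onto such a subspace splits `C = N + R` with `‖N‖ ≤ σ_{k+1}(C)`
and `rank R ≤ k`; conversely, if `C = N + R` with `rank R ≤ k`, then `C = N` on `ker R`, so
`σ_{k+1}(C) ≤ ‖N‖`. Hence `p(C)` is the least value of `rank R / n + ‖N‖` over all splittings
`C = N + R` with `rank R < n`, and both directions of the theorem follow by reading the
`limsup` in `d_acs` through this identity.
-/

open Matrix InnerProductSpace Finset Module
open scoped InnerProductSpace Topology

section
variable {n : ℕ}

theorem ENNReal.exists_tendsto_zero_lt_ofReal {L : ℕ → ℝ≥0∞} (hfin : ∀ m, L m ≠ ⊤)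
    (hL : Tendsto L atTop (𝓝 0)) :
    ∃ w : ℕ → ℝ, (∀ m, 0 ≤ w m) ∧ Tendsto w atTop (𝓝 0) ∧ ∀ m, L m < ENNReal.ofReal (w m) := by
  refine ⟨fun m => (L m).toReal + 1 / (m + 1), fun m => by positivity, ?_, fun m => ?_⟩
  · simpa using ((ENNReal.tendsto_toReal ENNReal.zero_ne_top).comp hL).add
      tendsto_one_div_add_atTop_nhds_zero_nat
  · rw [ENNReal.ofReal_add ENNReal.toReal_nonneg (by positivity), ENNReal.ofReal_toReal (hfin m)]
    exact ENNReal.lt_add_right (hfin m) (ENNReal.ofReal_pos.2 (by positivity)).ne'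

theorem Tuple.comp_sort_rev_le_iff {α : Type*} [LinearOrder α] (f : Fin n → α) (t : α)
    (i : Fin n) : f (Tuple.sort f i.rev) ≤ t ↔ #{j | t < f j} ≤ i := by
  have hg := Tuple.monotone_sort f
  rw [← Finset.card_equiv (Tuple.sort f) (s := {j | t < f (Tuple.sort f j)}) (by simp)]
  constructor
  · intro h
    calc #{j | t < f (Tuple.sort f j)} ≤ #(Ioi i.rev) :=
          card_le_card fun j hj => by
            simp only [mem_filter, mem_univ, true_and] at hj
            exact mem_Ioi.2 (lt_of_not_ge fun hji => (hj.trans_le (hg hji)).not_ge h)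
      _ = i := by simp only [Fin.card_Ioi, Fin.val_rev]; omega
  · intro h
    by_contra! hlt
    have : #(Ici i.rev) ≤ #{j | t < f (Tuple.sort f j)} :=
      card_le_card fun j hj => by simpa using hlt.trans_le (hg (mem_Ici.1 hj))
    simp only [Fin.card_Ici, Fin.val_rev, tsub_le_iff_right] at this
    omega

theorem OrthonormalBasis.inner_eq_zero_of_mem_orthogonal_span_image {ι 𝕜 E : Type*} [Fintype ι]
    [DecidableEq E] [RCLike 𝕜] [NormedAddCommGroup E] [InnerProductSpace 𝕜 E]
    (b : OrthonormalBasis ι 𝕜 E) {S : Finset ι} {x : E}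
    (hx : x ∈ (Submodule.span 𝕜 (S.image b : Set E))ᗮ) {j : ι} (hj : j ∈ S) : ⟪b j, x⟫_𝕜 = 0 :=
  Submodule.inner_right_of_mem_orthogonal (Submodule.subset_span (by simpa using ⟨j, hj, rfl⟩)) hx

theorem OrthonormalBasis.finrank_le_finrank_orthogonal_span_image_add_card {ι 𝕜 E : Type*}
    [Fintype ι] [DecidableEq E] [RCLike 𝕜] [NormedAddCommGroup E] [InnerProductSpace 𝕜 E]
    [FiniteDimensional 𝕜 E] (b : OrthonormalBasis ι 𝕜 E) (S : Finset ι) :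
    finrank 𝕜 E ≤ finrank 𝕜 (Submodule.span 𝕜 (S.image b : Set E))ᗮ + #S := by
  have hcompl := (Submodule.span 𝕜 (S.image b : Set E)).finrank_add_finrank_orthogonal
  have hspan : finrank 𝕜 (Submodule.span 𝕜 (S.image b : Set E)) ≤ #(S.image b) :=
    finrank_span_finset_le_card _
  have himage := card_image_le (s := S) (f := b)
  omega

theorem Matrix.rank_eq_finrank_range_toEuclideanLin {m k 𝕜 : Type*} [Fintype m] [Fintype k]
    [DecidableEq k] [RCLike 𝕜] (A : Matrix m k 𝕜) :
    A.rank = finrank 𝕜 (LinearMap.range (toEuclideanLin A)) := by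
  rw [toEuclideanLin_eq_toLin_orthonormal]
  exact A.rank_eq_finrank_range_toLin _ _

noncomputable abbrev gramEigenvalues (C : Matrix (Fin n) (Fin n) ℂ) : Fin n → ℝ :=
  (isHermitian_conjTranspose_mul_self C).eigenvalues

noncomputable abbrev gramEigenbasis (C : Matrix (Fin n) (Fin n) ℂ) :
    OrthonormalBasis (Fin n) ℂ (EuclideanSpace ℂ (Fin n)) :=
  (isHermitian_conjTranspose_mul_self C).eigenvectorBasis

theorem adjoint_toEuclideanLin_apply_gramEigenbasis (C : Matrix (Fin n) (Fin n) ℂ) (j : Fin n) :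
    (toEuclideanLin C).adjoint (toEuclideanLin C (gramEigenbasis C j)) =
      (gramEigenvalues C j : ℂ) • gramEigenbasis C j := by
  rw [← LinearMap.comp_apply, ← toEuclideanLin_conjTranspose_eq_adjoint, ← toLpLin_mul_same,
    toLpLin_apply, IsHermitian.mulVec_eigenvectorBasis]
  rfl

theorem norm_toEuclideanLin_apply_sq (C : Matrix (Fin n) (Fin n) ℂ)
    (x : EuclideanSpace ℂ (Fin n)) :
    ‖toEuclideanLin C x‖ ^ 2 = ∑ j, gramEigenvalues C j * ‖⟪gramEigenbasis C j, x⟫_ℂ‖ ^ 2 := by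
  set b := gramEigenbasis C
  have hcoef : ∀ j, ⟪b j, (toEuclideanLin C).adjoint (toEuclideanLin C x)⟫_ℂ =
      gramEigenvalues C j * ⟪b j, x⟫_ℂ := by
    intro j
    rw [LinearMap.adjoint_inner_right, ← LinearMap.adjoint_inner_left,
      adjoint_toEuclideanLin_apply_gramEigenbasis, inner_smul_left, Complex.conj_ofReal]
  rw [← RCLike.ofReal_inj (K := ℂ), RCLike.ofReal_pow, ← inner_self_eq_norm_sq_to_K,
    ← LinearMap.adjoint_inner_right, ← b.sum_inner_mul_inner]
  push_cast
  refine sum_congr rfl fun j _ => ?_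
  rw [hcoef, ← inner_conj_symm, mul_left_comm, RCLike.conj_mul]
  simp

-- `sv C i` is by definition `unsortedSv C (Tuple.sort (unsortedSv C) i.rev)`.
noncomputable abbrev unsortedSv (C : Matrix (Fin n) (Fin n) ℂ) : Fin n → ℝ :=
  fun j => √(gramEigenvalues C j)

theorem specNorm_nonneg (C : Matrix (Fin n) (Fin n) ℂ) : 0 ≤ specNorm C :=
  Real.iSup_nonneg fun _ => Real.sqrt_nonneg _

theorem sv_le_iff_card_lt_unsortedSv (C : Matrix (Fin n) (Fin n) ℂ) (t : ℝ) (i : Fin n) :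
    sv C i ≤ t ↔ #{j | t < unsortedSv C j} ≤ i :=
  Tuple.comp_sort_rev_le_iff (unsortedSv C) t i

theorem forall_sv_le_iff (C : Matrix (Fin n) (Fin n) ℂ) (t : ℝ) :
    (∀ i, sv C i ≤ t) ↔ ∀ j, unsortedSv C j ≤ t :=
  ⟨fun h j => by simpa [sv] using h (Tuple.sort (unsortedSv C) |>.symm j).rev, fun h _ => h _⟩

theorem norm_toEuclideanLin_apply_le {C : Matrix (Fin n) (Fin n) ℂ} {t : ℝ} (ht : 0 ≤ t)
    {x : EuclideanSpace ℂ (Fin n)}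
    (hx : ∀ j, ⟪gramEigenbasis C j, x⟫_ℂ ≠ 0 → unsortedSv C j ≤ t) :
    ‖toEuclideanLin C x‖ ≤ t * ‖x‖ := by
  refine le_of_sq_le_sq ?_ (by positivity)
  rw [mul_pow, norm_toEuclideanLin_apply_sq, ← (gramEigenbasis C).sum_sq_norm_inner_right,
    mul_sum]
  refine sum_le_sum fun j _ => ?_
  by_cases hj : ⟪gramEigenbasis C j, x⟫_ℂ = 0
  · simp [hj]
  · gcongr
    exact (Real.sqrt_le_left ht).1 (hx j hj)

theorem lt_norm_toEuclideanLin_apply {C : Matrix (Fin n) (Fin n) ℂ} {t : ℝ} (ht : 0 ≤ t)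
    {x : EuclideanSpace ℂ (Fin n)} (hx0 : x ≠ 0)
    (hx : ∀ j, ⟪gramEigenbasis C j, x⟫_ℂ ≠ 0 → t < unsortedSv C j) :
    t * ‖x‖ < ‖toEuclideanLin C x‖ := by
  refine lt_of_pow_lt_pow_left₀ 2 (norm_nonneg _) ?_
  rw [mul_pow, norm_toEuclideanLin_apply_sq, ← (gramEigenbasis C).sum_sq_norm_inner_right,
    mul_sum]
  have hlt : ∀ j, ⟪gramEigenbasis C j, x⟫_ℂ ≠ 0 → t ^ 2 < gramEigenvalues C j := fun j hj =>
    (Real.lt_sqrt ht).1 (hx j hj)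
  obtain ⟨j, hj⟩ : ∃ j, ⟪gramEigenbasis C j, x⟫_ℂ ≠ 0 := by
    by_contra! h
    exact hx0 (by simpa [h] using ((gramEigenbasis C).sum_repr' x).symm)
  refine sum_lt_sum (fun i _ => ?_) ⟨j, mem_univ j, by gcongr; exact hlt j hj⟩
  by_cases hi : ⟪gramEigenbasis C i, x⟫_ℂ = 0
  · simp [hi]
  · exact mul_le_mul_of_nonneg_right (hlt i hi).le (by positivity)

theorem specNorm_le_iff (C : Matrix (Fin n) (Fin n) ℂ) {t : ℝ} (ht : 0 ≤ t) :
    specNorm C ≤ t ↔ ∀ x, ‖toEuclideanLin C x‖ ≤ t * ‖x‖ := by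
  have hsup : specNorm C ≤ t ↔ ∀ i, sv C i ≤ t :=
    ⟨fun h i => (le_ciSup (Set.finite_range _).bddAbove i).trans h, fun h => Real.iSup_le h ht⟩
  rw [hsup, forall_sv_le_iff]
  refine ⟨fun h x => norm_toEuclideanLin_apply_le ht fun j _ => h j, fun h j => ?_⟩
  by_contra! hj
  have hb : ∀ i, ⟪gramEigenbasis C i, gramEigenbasis C j⟫_ℂ ≠ 0 → t < unsortedSv C i := by
    intro i hi
    rw [orthonormal_iff_ite.1 (gramEigenbasis C).orthonormal] at hi
    grind
  exact (lt_norm_toEuclideanLin_apply ht ((gramEigenbasis C).orthonormal.ne_zero j) hb).not_ge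
    (h _)

theorem sv_le_iff_exists_submodule (C : Matrix (Fin n) (Fin n) ℂ) {t : ℝ} (ht : 0 ≤ t)
    (k : Fin n) :
    sv C k ≤ t ↔ ∃ W : Submodule ℂ (EuclideanSpace ℂ (Fin n)),
      n ≤ finrank ℂ W + k ∧ ∀ x ∈ W, ‖toEuclideanLin C x‖ ≤ t * ‖x‖ := by
  classical
  rw [sv_le_iff_card_lt_unsortedSv]
  set b := gramEigenbasis C
  set S : Finset (Fin n) := {j | t < unsortedSv C j}
  have hdim := b.finrank_le_finrank_orthogonal_span_image_add_card
  rw [finrank_euclideanSpace_fin] at hdim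
  constructor
  · intro hS
    refine ⟨(Submodule.span ℂ (S.image b : Set _))ᗮ, (hdim S).trans (by omega),
      fun x hx => norm_toEuclideanLin_apply_le ht fun j hj => ?_⟩
    by_contra! hjS
    exact hj (b.inner_eq_zero_of_mem_orthogonal_span_image hx (by simpa [S] using hjS))
  · rintro ⟨W, hW, hWt⟩
    by_contra! hS
    set V := (Submodule.span ℂ (Sᶜ.image b : Set (EuclideanSpace ℂ (Fin n))))ᗮ
    have hV : n ≤ finrank ℂ V + (n - #S) := by simpa [card_compl] using hdim Sᶜ
    have hVW : ¬ Disjoint V W := fun hdisj => by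
      have := Submodule.finrank_add_finrank_le_of_disjoint hdisj
      rw [finrank_euclideanSpace_fin] at this
      omega
    obtain ⟨x, hxV, hxW, hx0⟩ := by simpa [Submodule.disjoint_def] using hVW
    refine (lt_norm_toEuclideanLin_apply ht hx0 fun j hj => ?_).not_ge (hWt x hxW)
    by_contra hjS
    exact hj (b.inner_eq_zero_of_mem_orthogonal_span_image hxV (by simpa [S] using hjS))

theorem exists_eq_add_specNorm_le_sv (C : Matrix (Fin n) (Fin n) ℂ) (k : Fin n) :
    ∃ N R : Matrix (Fin n) (Fin n) ℂ, C = N + R ∧ specNorm N ≤ sv C k ∧ R.rank ≤ k := by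
  have ht : 0 ≤ sv C k := Real.sqrt_nonneg _
  obtain ⟨W, hW, hWt⟩ := (sv_le_iff_exists_submodule C ht k).1 le_rfl
  set T := toEuclideanLin C
  refine ⟨toEuclideanLin.symm (T ∘ₗ W.starProjection.toLinearMap),
    toEuclideanLin.symm (T ∘ₗ Wᗮ.starProjection.toLinearMap), toEuclideanLin.injective ?_,
    (specNorm_le_iff _ ht).2 fun x => ?_, ?_⟩
  · ext1 x
    simp [T, ← map_add]
  · simp only [LinearEquiv.apply_symm_apply, LinearMap.comp_apply]
    exact (hWt _ (W.starProjection_apply_mem x)).trans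
      (mul_le_mul_of_nonneg_left (W.norm_starProjection_apply_le x) ht)
  · have hrange : LinearMap.range Wᗮ.starProjection.toLinearMap = Wᗮ := Wᗮ.range_starProjection
    have hcompl := W.finrank_add_finrank_orthogonal
    rw [finrank_euclideanSpace_fin] at hcompl
    rw [Matrix.rank_eq_finrank_range_toEuclideanLin, LinearEquiv.apply_symm_apply,
      LinearMap.range_comp, hrange]
    have := Wᗮ.finrank_map_le T
    omega

theorem sv_le_specNorm_of_eq_add {C N R : Matrix (Fin n) (Fin n) ℂ} (hC : C = N + R) {k : Fin n}
    (hR : R.rank ≤ k) : sv C k ≤ specNorm N := by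
  have hN : 0 ≤ specNorm N := specNorm_nonneg N
  refine (sv_le_iff_exists_submodule C hN k).2
    ⟨LinearMap.ker (toEuclideanLin R), ?_, fun x hx => ?_⟩
  · have := (toEuclideanLin R).finrank_range_add_finrank_ker
    rw [← Matrix.rank_eq_finrank_range_toEuclideanLin, finrank_euclideanSpace_fin] at this
    omega
  · rw [hC, map_add, LinearMap.add_apply, LinearMap.mem_ker.1 hx, add_zero]
    exact (specNorm_le_iff N hN).1 le_rfl x

theorem pA_le_iff_exists_eq_add {C : Matrix (Fin n) (Fin n) ℂ} (hn : 0 < n) {w : ℝ} :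
    pA C ≤ w ↔ ∃ N R : Matrix (Fin n) (Fin n) ℂ,
      C = N + R ∧ R.rank < n ∧ (R.rank : ℝ) / n + specNorm N ≤ w := by
  constructor
  · intro h
    have : Nonempty (Fin n) := ⟨⟨0, hn⟩⟩
    obtain ⟨i, hi⟩ := exists_eq_ciInf_of_finite (f := fun i : Fin n => ((i : ℕ) : ℝ) / n + sv C i)
    obtain ⟨N, R, hC, hN, hR⟩ := exists_eq_add_specNorm_le_sv C i
    refine ⟨N, R, hC, hR.trans_lt i.isLt, ?_⟩
    calc (R.rank : ℝ) / n + specNorm N ≤ ((i : ℕ) : ℝ) / n + sv C i := by gcongr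
      _ ≤ w := hi.trans_le h
  · rintro ⟨N, R, hC, hRn, hw⟩
    let k : Fin n := ⟨R.rank, hRn⟩
    calc pA C ≤ (k : ℝ) / n + sv C k := ciInf_le (Set.finite_range _).bddBelow k
      _ ≤ w := by grw [sv_le_specNorm_of_eq_add hC le_rfl]; exact hw

def EventuallySplits (A B : (n : ℕ) → Matrix (Fin n) (Fin n) ℂ) (ω c : ℝ) : Prop :=
  ∃ n₀ : ℕ, ∀ n, n₀ < n → ∃ N R : Matrix (Fin n) (Fin n) ℂ,
    A n = B n + N + R ∧ specNorm N ≤ ω ∧ (R.rank : ℝ) ≤ n * c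

theorem eventuallySplits_of_one_le (A B : (n : ℕ) → Matrix (Fin n) (Fin n) ℂ) {w : ℝ}
    (hw : 1 ≤ w) : EventuallySplits A B w w := by
  refine ⟨0, fun n _ => ⟨0, A n - B n, by abel,
    (specNorm_le_iff (0 : Matrix (Fin n) (Fin n) ℂ) (by linarith)).2 fun x => ?_, ?_⟩⟩
  · simp only [map_zero, LinearMap.zero_apply, norm_zero]
    positivity
  · calc ((A n - B n).rank : ℝ) ≤ n := by exact_mod_cast (A n - B n).rank_le_width
      _ ≤ n * w := le_mul_of_one_le_right (Nat.cast_nonneg n) hw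

theorem eventuallySplits_of_dacs_lt {A B : (n : ℕ) → Matrix (Fin n) (Fin n) ℂ} {w : ℝ}
    (h : dacs A B < ENNReal.ofReal w) : EventuallySplits A B w w := by
  obtain ⟨n₀, hn₀⟩ := eventually_atTop.1 (eventually_lt_of_limsup_lt h)
  refine ⟨n₀, fun n hn => ?_⟩
  have hn' : (0 : ℝ) < n := by exact_mod_cast (show 0 < n by omega)
  have hpA : pA (A n - B n) < w := (ENNReal.ofReal_lt_ofReal_iff'.1 (hn₀ n hn.le)).1
  obtain ⟨N, R, hC, -, hw⟩ := (pA_le_iff_exists_eq_add (C := A n - B n) (by omega)).1 le_rfl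
  have hN : 0 ≤ specNorm N := specNorm_nonneg N
  have hR : 0 ≤ (R.rank : ℝ) / n := by positivity
  refine ⟨N, R, by rw [add_assoc, ← hC]; abel, by linarith, ?_⟩
  rw [← div_le_iff₀' hn']
  linarith

theorem dacs_le_of_eventuallySplits {A B : (n : ℕ) → Matrix (Fin n) (Fin n) ℂ} {ω c : ℝ}
    (h : EventuallySplits A B ω c) (hc : c < 1) : dacs A B ≤ ENNReal.ofReal (ω + c) := by
  obtain ⟨n₀, hn₀⟩ := h
  refine limsup_le_of_le (h := eventually_atTop.2 ⟨n₀ + 1, fun n hn => ?_⟩)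
  obtain ⟨N, R, hA, hN, hR⟩ := hn₀ n hn
  have hn' : (0 : ℝ) < n := by exact_mod_cast (show 0 < n by omega)
  refine ENNReal.ofReal_le_ofReal ((pA_le_iff_exists_eq_add (C := A n - B n) (by omega)).2
    ⟨N, R, by rw [hA]; abel, ?_, ?_⟩)
  · exact_mod_cast hR.trans_lt (mul_lt_of_lt_one_right hn' hc)
  · rw [add_comm ω]
    exact add_le_add ((div_le_iff₀' hn').2 hR) hN

theorem eventuallySplits_of_min_dacs_lt {A B : (n : ℕ) → Matrix (Fin n) (Fin n) ℂ} {w : ℝ}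
    (h : min (dacs A B) 1 < ENNReal.ofReal w) : EventuallySplits A B w w :=
  (min_lt_iff.1 h).elim eventuallySplits_of_dacs_lt fun h1 =>
    eventuallySplits_of_one_le A B (ENNReal.one_lt_ofReal.1 h1).le

end

/-- `d_acs` induces a.c.s. convergence. -/
theorem dacs_tendsto_iff_acs (A : (n : ℕ) → Matrix (Fin n) (Fin n) ℂ)
    (B : ℕ → (n : ℕ) → Matrix (Fin n) (Fin n) ℂ) :
    Filter.Tendsto (fun m => dacs A (B m)) Filter.atTop (nhds 0) ↔
      ∃ (N R : (m : ℕ) → (n : ℕ) → Matrix (Fin n) (Fin n) ℂ) (nm : ℕ → ℕ) (ω c : ℕ → ℝ),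
        (∀ m, 0 ≤ ω m) ∧ (∀ m, 0 ≤ c m) ∧
        Filter.Tendsto ω Filter.atTop (nhds 0) ∧
        Filter.Tendsto c Filter.atTop (nhds 0) ∧
        (∀ m n : ℕ, nm m < n →
          A n = B m n + N m n + R m n ∧
          specNorm (N m n) ≤ ω m ∧
          ((Matrix.rank (R m n) : ℝ) ≤ (n : ℝ) * c m)) := by
  constructor
  · intro h
    -- `dacs` may be `⊤`; capping it at `1` is harmless since splittings with `w ≥ 1` are trivial.
    obtain ⟨w, hw0, hwt, hw⟩ := ENNReal.exists_tendsto_zero_lt_ofReal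
      (L := fun m => min (dacs A (B m)) 1)
      (fun m => ((min_le_right _ _).trans_lt ENNReal.one_lt_top).ne)
      (by simpa using h.min (tendsto_const_nhds (x := 1)))
    choose nm hsplit using fun m => eventuallySplits_of_min_dacs_lt (hw m)
    choose! N R hdec using hsplit
    exact ⟨N, R, nm, w, w, hw0, hw0, hwt, hwt, hdec⟩
  · rintro ⟨N, R, nm, ω, c, -, -, hω, hc, hdec⟩
    have hle : ∀ᶠ m in atTop, dacs A (B m) ≤ ENNReal.ofReal (ω m + c m) :=
      (hc.eventually_lt_const one_pos).mono fun m hm =>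
        dacs_le_of_eventuallySplits ⟨nm m, fun n hn => ⟨N m n, R m n, hdec m n hn⟩⟩ hm
    have hlim : Tendsto (fun m => ENNReal.ofReal (ω m + c m)) atTop (𝓝 0) := by
      simpa using ENNReal.tendsto_ofReal (hω.add hc)
    exact tendsto_of_tendsto_of_tendsto_of_le_of_le' tendsto_const_nhds hlim
      (.of_forall fun _ => bot_le) hle
end
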